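/- Suppose F is a SAGBI basis for A. Then an element p ∈ R[X] belongs to A if and only if p s-reduces to 0 via F. -/

import Mathlib

open MvPolynomial

/-- A term order on the monomials (exponent vectors) of a polynomial ring in `n`
variables: a well-founded linear order compatible with multiplication of power
products (i.e. with addition of exponent vectors). -/
structure TermOrder (n : ℕ) where
  lo : LinearOrder (Fin n →₀ ℕ)
  wf : WellFounded lo.lt
  add_le_add : ∀ a b c : Fin n →₀ ℕ, lo.le a b → lo.le (a + c) (b + c)

namespace TermOrder

variable {n : ℕ} {R : Type*} [CommRing R]

/-- `lp p`: the leading power product (exponent vector) of `p`; junk value `0`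
for the zero polynomial. -/
noncomputable def lp (ord : TermOrder n) (p : MvPolynomial (Fin n) R) : Fin n →₀ ℕ :=
  WithBot.unbotD 0 (@Finset.max _ ord.lo p.support)

/-- `lc p`: the leading coefficient of `p` (0 if `p = 0`). -/
noncomputable def lc (ord : TermOrder n) (p : MvPolynomial (Fin n) R) : R :=
  p.coeff (ord.lp p)

/-- `ltm p`: the leading term `lc(p)·lp(p)` of `p` (0 if `p = 0`). -/
noncomputable def ltm (ord : TermOrder n) (p : MvPolynomial (Fin n) R) : MvPolynomial (Fin n) R :=
  monomial (ord.lp p) (ord.lc p)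

end TermOrder

variable {n : ℕ} {R : Type*} [CommRing R]

/-- An `F`-power product: a finite product `∏ fᵢ^{eᵢ}` with `fᵢ ∈ F`. -/
def IsPowerProduct (F : Set (MvPolynomial (Fin n) R)) (q : MvPolynomial (Fin n) R) : Prop :=
  ∃ e : MvPolynomial (Fin n) R →₀ ℕ, (e.support : Set (MvPolynomial (Fin n) R)) ⊆ F ∧
    q = e.prod (fun f k => f ^ k)

/-- `F` is a SAGBI basis for the `R`-subalgebra `A`: `R[Lt A] = R[Lt F]`. -/
def IsSAGBI (ord : TermOrder n) (A : Subalgebra R (MvPolynomial (Fin n) R))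
    (F : Set (MvPolynomial (Fin n) R)) : Prop :=
  Algebra.adjoin R (ord.ltm '' (A : Set (MvPolynomial (Fin n) R))) =
    Algebra.adjoin R (ord.ltm '' F)

/-- One step of s-reduction of `g` to `h` via `F`. -/
def SStep (ord : TermOrder n) (F : Set (MvPolynomial (Fin n) R))
    (g h : MvPolynomial (Fin n) R) : Prop :=
  ∃ (β : Fin n →₀ ℕ) (N : ℕ) (q : Fin N → MvPolynomial (Fin n) R) (r : Fin N → R),
    g.coeff β ≠ 0 ∧
    (∀ i, IsPowerProduct F (q i) ∧ q i ≠ 0 ∧ ord.lp (q i) = β) ∧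
    g.coeff β = ∑ i, r i * ord.lc (q i) ∧
    h = g - ∑ i, C (r i) * q i

/-- `g` s-reduces to `h` via `F`: a finite chain of one-step s-reductions. -/
def SReduce (ord : TermOrder n) (F : Set (MvPolynomial (Fin n) R)) :
    MvPolynomial (Fin n) R → MvPolynomial (Fin n) R → Prop :=
  Relation.ReflTransGen (SStep ord F)

/-- One step of si-reduction of `h` to `h'` via `G`, relative to the subalgebra `A`. -/
def SiStep (ord : TermOrder n) (A : Subalgebra R (MvPolynomial (Fin n) R))
    (G : Set (MvPolynomial (Fin n) R)) (h h' : MvPolynomial (Fin n) R) : Prop :=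
  ∃ (α : Fin n →₀ ℕ) (M : ℕ) (g a : Fin M → MvPolynomial (Fin n) R),
    h.coeff α ≠ 0 ∧
    (∀ i, g i ∈ G) ∧ (∀ i, a i ∈ A) ∧
    (∀ i, a i * g i ≠ 0 ∧ ord.lp (a i * g i) = α) ∧
    (monomial α (h.coeff α) : MvPolynomial (Fin n) R) = ∑ i, ord.ltm (a i * g i) ∧
    h' = h - ∑ i, a i * g i

/-- `h` si-reduces to `h'` via `G`: a finite chain of one-step si-reductions. -/
def SiReduce (ord : TermOrder n) (A : Subalgebra R (MvPolynomial (Fin n) R))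
    (G : Set (MvPolynomial (Fin n) R)) :
    MvPolynomial (Fin n) R → MvPolynomial (Fin n) R → Prop :=
  Relation.ReflTransGen (SiStep ord A G)

/-- The subalgebra `R[Lt A]` generated by the leading terms of elements of `A`. -/
noncomputable def LtAlg (ord : TermOrder n) (A : Subalgebra R (MvPolynomial (Fin n) R)) :
    Subalgebra R (MvPolynomial (Fin n) R) :=
  Algebra.adjoin R (ord.ltm '' (A : Set (MvPolynomial (Fin n) R)))

/-- The leading term of an element of `A`, as an element of `R[Lt A]`. -/
noncomputable def ltA (ord : TermOrder n) (A : Subalgebra R (MvPolynomial (Fin n) R))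
    (a : A) : LtAlg ord A :=
  ⟨ord.ltm (a : MvPolynomial (Fin n) R), Algebra.subset_adjoin ⟨a, a.2, rfl⟩⟩

/-- `G ⊆ I` is a SAGBI–Gröbner basis (SG-basis) for the ideal `I` of `A`:
`Lt G` generates the ideal `⟨Lt I⟩` in the subalgebra `R[Lt A]`. -/
def IsSGBasis (ord : TermOrder n) (A : Subalgebra R (MvPolynomial (Fin n) R))
    (I : Ideal A) (G : Set A) : Prop :=
  Ideal.span
      ((Subtype.val ⁻¹' (ord.ltm '' (Subtype.val '' G)) : Set (LtAlg ord A))) =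
  Ideal.span
      ((Subtype.val ⁻¹' (ord.ltm '' (Subtype.val '' (I : Set A))) : Set (LtAlg ord A)))


/-! `←`: an s-reduction step subtracts an `R`-combination of `F`-power products, which lie in
`A`, so it does not change membership in `A`. `→`: for `0 ≠ p ∈ A`, `lt p ∈ R[Lt A] = R[Lt F]`,
and over a domain `Lt` is multiplicative, so `lt p` is an `R`-combination of leading terms of
`F`-power products; those with leading power product `lp p` give an s-reduction step that
strictly lowers the leading power product, and the term order is well-founded. -/

open scoped MonomialOrder

theorem Finset.unbotD_max_eq_sup {α : Type*} [LinearOrder α] [OrderBot α] (s : Finset α) :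
    s.max.unbotD ⊥ = s.sup id := by
  rcases s.eq_empty_or_nonempty with rfl | h
  · rfl
  · rw [Finset.max_eq_sup_coe, ← Function.comp_id WithBot.some, ← Finset.coe_sup_of_nonempty h,
      WithBot.unbotD_coe]

namespace MonomialOrder

variable {σ : Type*} {m : MonomialOrder σ}

variable (m) in
noncomputable def leadingTermHom [NoZeroDivisors R] : MvPolynomial σ R →* MvPolynomial σ R where
  toFun := m.leadingTerm
  map_one' := by simpa using m.leadingTerm_C (1 : R)
  map_mul' := m.leadingTerm_mul

variable (m) in
theorem adjoin_leadingTerm_eq_span [NoZeroDivisors R] (S : Set (MvPolynomial σ R)) :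
    Subalgebra.toSubmodule (Algebra.adjoin R (m.leadingTerm '' S)) =
      Submodule.span R (m.leadingTerm '' Submonoid.closure S) := by
  rw [Algebra.adjoin_eq_span]
  change _ = Submodule.span R
    (((Submonoid.closure S).map m.leadingTermHom : Submonoid _) : Set (MvPolynomial σ R))
  rw [MonoidHom.map_mclosure]
  rfl

theorem exists_leadingCoeff_eq_sum {S : Set (MvPolynomial σ R)} {p : MvPolynomial σ R}
    (h : m.leadingTerm p ∈ Submodule.span R (m.leadingTerm '' S)) :
    ∃ (s : Finset (MvPolynomial σ R)) (r : MvPolynomial σ R → R), ↑s ⊆ S ∧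
      (∀ q ∈ s, q ≠ 0 ∧ m.degree q = m.degree p) ∧
      m.leadingCoeff p = ∑ q ∈ s, r q * m.leadingCoeff q := by
  classical
  obtain ⟨l, hl, hsum⟩ := (Finsupp.mem_span_image_iff_linearCombination R).mp h
  refine ⟨l.support.filter fun q => q ≠ 0 ∧ m.degree q = m.degree p, l,
    fun q hq => hl (Finset.mem_filter.mp hq).1, fun q hq => (Finset.mem_filter.mp hq).2, ?_⟩
  have hcoeff := congrArg (coeff (m.degree p)) hsum
  rw [Finsupp.linearCombination_apply, Finsupp.sum, coeff_sum, leadingTerm, coeff_monomial,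
    if_pos rfl] at hcoeff
  rw [Finset.sum_filter, ← hcoeff]
  refine Finset.sum_congr rfl fun q _ => ?_
  by_cases hq : q = 0
  · simp [hq]
  · simp [hq, leadingTerm, coeff_monomial, leadingCoeff]

theorem degree_sub_sum_lt {p : MvPolynomial σ R} {s : Finset (MvPolynomial σ R)}
    {r : MvPolynomial σ R → R} (hs : ∀ q ∈ s, m.degree q = m.degree p)
    (hc : m.leadingCoeff p = ∑ q ∈ s, r q * m.leadingCoeff q)
    (hne : p - ∑ q ∈ s, C (r q) * q ≠ 0) :
    m.degree (p - ∑ q ∈ s, C (r q) * q) ≺[m] m.degree p := by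
  set h := p - ∑ q ∈ s, C (r q) * q
  have hcoeff (d : σ →₀ ℕ) : h.coeff d = p.coeff d - ∑ q ∈ s, r q * q.coeff d := by
    simp [h, coeff_sum, coeff_C_mul]
  have hvanish (d : σ →₀ ℕ) (hd : m.degree p ≼[m] d) : h.coeff d = 0 := by
    rcases hd.lt_or_eq with hlt | heq
    · rw [hcoeff, coeff_eq_zero_of_lt hlt, Finset.sum_eq_zero fun q hq => by
        rw [coeff_eq_zero_of_lt (hs q hq ▸ hlt), mul_zero], sub_zero]
    · obtain rfl := m.toSyn.injective heq
      rw [hcoeff, sub_eq_zero, ← leadingCoeff, hc]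
      exact Finset.sum_congr rfl fun q hq => by rw [leadingCoeff, hs q hq]
  by_contra! hle
  exact hne (m.coeff_degree_eq_zero_iff.mp (hvanish _ hle))

end MonomialOrder

theorem isPowerProduct_iff_mem_closure {F : Set (MvPolynomial (Fin n) R)}
    {q : MvPolynomial (Fin n) R} : IsPowerProduct F q ↔ q ∈ Submonoid.closure F := by
  classical
  constructor
  · rintro ⟨e, he, rfl⟩
    exact Submonoid.prod_mem _ fun f hf => pow_mem (Submonoid.subset_closure (he hf)) _
  · intro hq
    rw [← Subtype.range_coe (s := F)] at hq
    obtain ⟨a, rfl⟩ := Submonoid.exists_finsupp_of_mem_closure_range _ _ hq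
    refine ⟨a.mapDomain Subtype.val, fun f hf => ?_, ?_⟩
    · obtain ⟨f, -, rfl⟩ := Finset.mem_image.mp (Finsupp.mapDomain_support hf)
      exact f.2
    · rw [Finsupp.prod_mapDomain_index_inj Subtype.val_injective]

theorem SStep.mem_iff {ord : TermOrder n} {A : Subalgebra R (MvPolynomial (Fin n) R)}
    {F : Set (MvPolynomial (Fin n) R)} (hFA : F ⊆ A) {g h : MvPolynomial (Fin n) R}
    (hgh : SStep ord F g h) : g ∈ A ↔ h ∈ A := by
  obtain ⟨_, N, q, r, _, hq, _, rfl⟩ := hgh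
  have hqA (i : Fin N) : q i ∈ A :=
    Submonoid.closure_le (S := A.toSubmonoid) |>.mpr hFA
      (isPowerProduct_iff_mem_closure.mp (hq i).1)
  have hsum : ∑ i, C (r i) * q i ∈ A :=
    A.sum_mem fun i _ => A.mul_mem (A.algebraMap_mem (r i)) (hqA i)
  rw [sub_eq_add_neg, add_mem_cancel_right (neg_mem hsum)]

theorem SReduce.mem_iff {ord : TermOrder n} {A : Subalgebra R (MvPolynomial (Fin n) R)}
    {F : Set (MvPolynomial (Fin n) R)} (hFA : F ⊆ A) {g h : MvPolynomial (Fin n) R}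
    (hgh : SReduce ord F g h) : g ∈ A ↔ h ∈ A := by
  induction hgh with
  | refl => rfl
  | tail _ hstep ih => exact ih.trans (hstep.mem_iff hFA)

namespace TermOrder

variable (ord : TermOrder n)

/-- A type synonym, since `Fin n →₀ ℕ` already carries the pointwise order. -/
def Syn (_ : TermOrder n) : Type := Fin n →₀ ℕ

noncomputable instance : AddCommMonoid ord.Syn := inferInstanceAs (AddCommMonoid (Fin n →₀ ℕ))

instance : IsCancelAdd ord.Syn := inferInstanceAs (IsCancelAdd (Fin n →₀ ℕ))

instance : LinearOrder ord.Syn := ord.lo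

instance : IsOrderedAddMonoid ord.Syn where
  add_le_add_left a b h c := ord.add_le_add a b c h

instance : WellFoundedLT ord.Syn := ⟨ord.wf⟩

/-- A negative `a` would give the smaller negative `a + a`, so there is no minimal one. -/
theorem Syn.zero_le (a : ord.Syn) : 0 ≤ a := by
  by_contra! ha
  obtain ⟨b, hb : b < 0, hmin⟩ := (wellFounded_lt (α := ord.Syn)).has_min {b | b < 0} ⟨a, ha⟩
  have hbb : b + b < b := by
    refine lt_of_le_of_ne (by simpa using add_le_add_left hb.le b) fun h => hb.ne ?_
    simpa using h
  exact hmin (b + b) (hbb.trans hb) hbb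

noncomputable def toMonomialOrder : MonomialOrder (Fin n) where
  syn := ord.Syn
  toSyn := ⟨Equiv.refl _, fun _ _ => rfl⟩
  toSyn_monotone a b hab := by
    obtain ⟨c, rfl⟩ := exists_add_of_le hab
    exact le_add_of_nonneg_right (α := ord.Syn) (Syn.zero_le ord c)

theorem lp_eq_degree :
    (ord.lp : MvPolynomial (Fin n) R → Fin n →₀ ℕ) = ord.toMonomialOrder.degree :=
  funext fun p => @Finset.unbotD_max_eq_sup ord.Syn _ ord.toMonomialOrder.orderBot p.support

theorem lc_eq_leadingCoeff :
    (ord.lc : MvPolynomial (Fin n) R → R) = ord.toMonomialOrder.leadingCoeff := by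
  funext p
  rw [lc, lp_eq_degree, MonomialOrder.leadingCoeff]

theorem ltm_eq_leadingTerm :
    (ord.ltm : MvPolynomial (Fin n) R → MvPolynomial (Fin n) R) =
      ord.toMonomialOrder.leadingTerm := by
  funext p
  rw [ltm, lp_eq_degree, lc_eq_leadingCoeff, MonomialOrder.leadingTerm]

theorem sStep_sub_sum {F : Set (MvPolynomial (Fin n) R)} {p : MvPolynomial (Fin n) R}
    (hp : p ≠ 0) {s : Finset (MvPolynomial (Fin n) R)} {r : MvPolynomial (Fin n) R → R}
    (hs : ∀ q ∈ s, IsPowerProduct F q ∧ q ≠ 0 ∧ ord.lp q = ord.lp p)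
    (hc : ord.lc p = ∑ q ∈ s, r q * ord.lc q) :
    SStep ord F p (p - ∑ q ∈ s, C (r q) * q) := by
  set e := s.equivFin
  have reindex {M : Type _} [AddCommMonoid M] (f : MvPolynomial (Fin n) R → M) :
      ∑ j, f (e.symm j) = ∑ q ∈ s, f q :=
    (Equiv.sum_comp e.symm fun q : s => f q).trans (Finset.sum_coe_sort s f)
  refine ⟨ord.lp p, s.card, fun j => e.symm j, fun j => r (e.symm j), ?_,
    fun j => hs _ (e.symm j).2, ?_, ?_⟩
  · rw [lp_eq_degree]
    exact ord.toMonomialOrder.coeff_degree_ne_zero_iff.mpr hp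
  · exact hc.trans (reindex fun q => r q * ord.lc q).symm
  · rw [reindex fun q => C (r q) * q]

theorem exists_sStep_degree_lt [NoZeroDivisors R] {A : Subalgebra R (MvPolynomial (Fin n) R)}
    {F : Set (MvPolynomial (Fin n) R)} (hF : IsSAGBI ord A F) {p : MvPolynomial (Fin n) R}
    (hp : p ∈ A) (hp0 : p ≠ 0) :
    ∃ h, SStep ord F p h ∧ (h ≠ 0 →
      ord.toMonomialOrder.degree h ≺[ord.toMonomialOrder] ord.toMonomialOrder.degree p) := by
  set m := ord.toMonomialOrder
  have hmem : m.leadingTerm p ∈ Submodule.span R (m.leadingTerm '' Submonoid.closure F) := by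
    rw [← m.adjoin_leadingTerm_eq_span, Subalgebra.mem_toSubmodule, ← ord.ltm_eq_leadingTerm,
      ← hF]
    exact Algebra.subset_adjoin ⟨p, hp, rfl⟩
  obtain ⟨s, r, hsF, hs, hc⟩ := m.exists_leadingCoeff_eq_sum hmem
  refine ⟨_, ord.sStep_sub_sum hp0 (fun q hq => ?_) ?_,
    m.degree_sub_sum_lt (fun q hq => (hs q hq).2) hc⟩
  · rw [lp_eq_degree]
    exact ⟨isPowerProduct_iff_mem_closure.mpr (hsF hq), hs q hq⟩
  · rwa [lc_eq_leadingCoeff]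

theorem sReduce_zero_of_mem [NoZeroDivisors R] {A : Subalgebra R (MvPolynomial (Fin n) R)}
    {F : Set (MvPolynomial (Fin n) R)} (hFA : F ⊆ A) (hF : IsSAGBI ord A F)
    {p : MvPolynomial (Fin n) R} (hp : p ∈ A) : SReduce ord F p 0 := by
  set m := ord.toMonomialOrder
  induction p using (InvImage.wf (fun p => m.toSyn (m.degree p)) wellFounded_lt).induction with
  | _ p ih =>
    by_cases hp0 : p = 0
    · rw [hp0]
      exact .refl
    obtain ⟨h, hstep, hlt⟩ := ord.exists_sStep_degree_lt hF hp hp0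
    by_cases hh0 : h = 0
    · rw [← hh0]
      exact .single hstep
    exact .head hstep (ih h (hlt hh0) ((hstep.mem_iff hFA).mp hp))

end TermOrder

theorem mem_iff_sreduce_zero_general {n : ℕ} {R : Type*} [CommRing R] [IsDomain R]
    (ord : TermOrder n)
    (A : Subalgebra R (MvPolynomial (Fin n) R)) (F : Set (MvPolynomial (Fin n) R))
    (hFA : F ⊆ (A : Set (MvPolynomial (Fin n) R))) (hF : IsSAGBI ord A F) :
    ∀ p : MvPolynomial (Fin n) R, p ∈ A ↔ SReduce ord F p 0 := fun _ =>
  ⟨ord.sReduce_zero_of_mem hFA hF, fun h => (h.mem_iff hFA).mpr A.zero_mem⟩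

/-- if `F` is a SAGBI basis for `A`, then `p ∈ A` iff `p`
s-reduces to `0` via `F`. -/
theorem mem_iff_sreduce_zero {n : ℕ} {R : Type*} [CommRing R] [IsDomain R]
    [IsNoetherianRing R] (ord : TermOrder n)
    (A : Subalgebra R (MvPolynomial (Fin n) R)) (F : Set (MvPolynomial (Fin n) R))
    (hFA : F ⊆ (A : Set (MvPolynomial (Fin n) R))) (hF : IsSAGBI ord A F) :
    ∀ p : MvPolynomial (Fin n) R, p ∈ A ↔ SReduce ord F p 0 :=
  mem_iff_sreduce_zero_general ord A F hFA hF
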